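/- The sum of all doubled phase-point operators equals 2d times the identity matrix, Σ_{m∈(ZMod 2d)²} A(m) = 2d·I; equivalently, the doubled Weyl transform of the constant function 1 is Op[1] = d·I. -/

import Mathlib

open scoped BigOperators
open Matrix

noncomputable section

/-- `omega n a = exp(2πi a / n)`, the `n`-th roots of unity raised to integer power `a`. -/
def omega (n : ℕ) (a : ℤ) : ℂ := Complex.exp (2 * Real.pi * Complex.I * a / n)

/-- `Zpow d k = Σ_j ω_d^(k·j) |j⟩⟨j|`, the `k`-th power of the clock operator. -/
def Zpow (d : ℕ) (k : ℤ) : Matrix (ZMod d) (ZMod d) ℂ :=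
  Matrix.of fun i j => if i = j then omega d (k * (j.val : ℤ)) else 0

/-- `Xpow d k = Σ_j |j+k⟩⟨j|`, the `k`-th power of the shift operator. -/
def Xpow (d : ℕ) (k : ℤ) : Matrix (ZMod d) (ZMod d) ℂ :=
  Matrix.of fun i j => if i = j + (k : ZMod d) then 1 else 0

/-- The Weyl–Heisenberg displacement operator `V(k) = ω_{2d}^{-k₁k₂} Z^{k₂} X^{k₁}` for `k ∈ ℤ²`. -/
def Vint (d : ℕ) [NeZero d] (k : ℤ × ℤ) : Matrix (ZMod d) (ZMod d) ℂ :=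
  omega (2 * d) (-(k.1 * k.2)) • (Zpow d k.2 * Xpow d k.1)

/-- The WHDO on the doubled phase space `(ZMod (2d))²`. -/
def V (d : ℕ) [NeZero d] (m : ZMod (2 * d) × ZMod (2 * d)) : Matrix (ZMod d) (ZMod d) ℂ :=
  Vint d ((m.1.val : ℤ), (m.2.val : ℤ))

/-- Discrete parity operator `R = Σ_j |-j⟩⟨j|`. -/
def R (d : ℕ) : Matrix (ZMod d) (ZMod d) ℂ :=
  Matrix.of fun i j => if i = -j then 1 else 0

/-- Doubled phase-point operator `A(m) = V(m)·R`. -/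
def A (d : ℕ) [NeZero d] (m : ZMod (2 * d) × ZMod (2 * d)) : Matrix (ZMod d) (ZMod d) ℂ :=
  V d m * R d

variable (d : ℕ) [NeZero d]

/-- Doubled Wigner transform: `Wig[O](m) = (1/(2d)) Tr(A(m)† O)`. -/
def Wig (O : Matrix (ZMod d) (ZMod d) ℂ) (m : ZMod (2 * d) × ZMod (2 * d)) : ℂ :=
  (1 / (2 * (d : ℂ))) * ((A d m)ᴴ * O).trace

/-- Doubled Weyl transform: `Op[f] = (1/2) Σ_m f(m) A(m)`. -/
def OpW (f : ZMod (2 * d) × ZMod (2 * d) → ℂ) : Matrix (ZMod d) (ZMod d) ℂ :=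
  (1 / 2 : ℂ) • ∑ m : ZMod (2 * d) × ZMod (2 * d), f m • A d m

/-- The projector `P = Wig ∘ Op` on functions on the doubled phase space. -/
def P (f : ZMod (2 * d) × ZMod (2 * d) → ℂ) : ZMod (2 * d) × ZMod (2 * d) → ℂ :=
  Wig d (OpW d f)

/-- Inner product on functions on the doubled phase space. -/
def ip (f g : ZMod (2 * d) × ZMod (2 * d) → ℂ) : ℂ :=
  ∑ m : ZMod (2 * d) × ZMod (2 * d), (starRingEnd ℂ) (f m) * g m

/-- Cross-correlation `(f ⋆ g)(m) = Σ_{m'} conj(f m') g(m'+m)`. -/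
def crossCor (f g : ZMod (2 * d) × ZMod (2 * d) → ℂ) (m : ZMod (2 * d) × ZMod (2 * d)) : ℂ :=
  ∑ m' : ZMod (2 * d) × ZMod (2 * d), (starRingEnd ℂ) (f m') * g (m' + m)

/-- The doubling map `ZMod d → ZMod (2d)`, `a ↦ 2a`. -/
def dbl (a : ZMod d) : ZMod (2 * d) := ((2 * a.val : ℕ) : ZMod (2 * d))

/-- The doubling map on the phase space. -/
def dbl2 (α : ZMod d × ZMod d) : ZMod (2 * d) × ZMod (2 * d) := (dbl d α.1, dbl d α.2)

/-- A stencil `M` is valid if its projection `M̄ = P M` is real-valued (M1),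
sums to 1 (M2), and satisfies the autocorrelation condition (M3). -/
def IsValidStencil (M : ZMod (2 * d) × ZMod (2 * d) → ℂ) : Prop :=
  (∀ m, (starRingEnd ℂ) (P d M m) = P d M m) ∧
  (∑ m : ZMod (2 * d) × ZMod (2 * d), P d M m) = 1 ∧
  (∀ α : ZMod d × ZMod d,
    crossCor d (P d M) (P d M) (dbl2 d α) = if α = 0 then 1 else 0)

/-- The `M`-PPO frame generated by a stencil `M`:
`A^M(α) = (1/2) Σ_{m'} M(m') A(m' + 2α)`. -/
def AM (M : ZMod (2 * d) × ZMod (2 * d) → ℂ) (α : ZMod d × ZMod d) :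
    Matrix (ZMod d) (ZMod d) ℂ :=
  (1 / 2 : ℂ) • ∑ m' : ZMod (2 * d) × ZMod (2 * d), M m' • A d (m' + dbl2 d α)

/-- A family of phase-point operators on `(ZMod d)²` is a valid PPO frame if it is
Hermitian (A1), trace-1 (A2), orthogonal (A3), and WHDO-covariant (A4). -/
def IsValidPPOFrame (B : ZMod d × ZMod d → Matrix (ZMod d) (ZMod d) ℂ) : Prop :=
  (∀ α, (B α)ᴴ = B α) ∧
  (∀ α, (B α).trace = 1) ∧
  (∀ α β, ((B α)ᴴ * B β).trace = if α = β then (d : ℂ) else 0) ∧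
  (∀ (k : ℤ × ℤ) (α : ZMod d × ZMod d),
    Vint d k * B α * (Vint d k)ᴴ = B (α + ((k.1 : ZMod d), (k.2 : ZMod d))))

/-- The `M`-Wigner transform: `Wig^M[O](α) = (1/d) Tr(A^M(α)† O)`. -/
def WigM (M : ZMod (2 * d) × ZMod (2 * d) → ℂ) (O : Matrix (ZMod d) (ZMod d) ℂ)
    (α : ZMod d × ZMod d) : ℂ :=
  (1 / (d : ℂ)) * ((AM d M α)ᴴ * O).trace

/-- The `M`-Weyl transform: `Op^M[f] = Σ_α f(α) A^M(α)`. -/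
def OpM (M : ZMod (2 * d) × ZMod (2 * d) → ℂ) (f : ZMod d × ZMod d → ℂ) :
    Matrix (ZMod d) (ZMod d) ℂ :=
  ∑ α : ZMod d × ZMod d, f α • AM d M α

/-- The symplectic discrete Fourier transform. -/
def SDFT (f : ZMod (2 * d) × ZMod (2 * d) → ℂ) (m : ZMod (2 * d) × ZMod (2 * d)) : ℂ :=
  (1 / (2 * (d : ℂ))) * ∑ m' : ZMod (2 * d) × ZMod (2 * d),
    omega (2 * d) (-((m.1.val : ℤ) * (m'.2.val : ℤ) - (m.2.val : ℤ) * (m'.1.val : ℤ))) * f m'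


/-- Coarse-grain-stencil PPO frame: `B(α) = (1/2) Σ_{b∈{0,1}²} A(2α + b)`. -/
def Bcgs (α : ZMod d × ZMod d) : Matrix (ZMod d) (ZMod d) ℂ :=
  (1 / 2 : ℂ) • ∑ b : ZMod 2 × ZMod 2,
    A d (dbl d α.1 + (b.1.val : ZMod (2 * d)), dbl d α.2 + (b.2.val : ZMod (2 * d)))

/-- Momentum basis state `|p⟩ = (1/√d) Σ_j ω_d^{p j} |j⟩`. -/
def pvec (p : ZMod d) : ZMod d → ℂ :=
  fun j => (1 / ((Real.sqrt d : ℝ) : ℂ)) * omega d ((p.val : ℤ) * (j.val : ℤ))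

/-- One-dimensional Dirichlet kernel `K(m) = (1/d) Σ_{t=-(d-1)/2}^{(d-1)/2} ω_{2d}^{t m}`. -/
def Kdir (m : ZMod (2 * d)) : ℂ :=
  (1 / (d : ℂ)) * ∑ t ∈ Finset.Icc (-(((d : ℤ) - 1) / 2)) (((d : ℤ) - 1) / 2),
    omega (2 * d) (t * (m.val : ℤ))

end

section Aux

lemma omega_add' (n : ℕ) (a b : ℤ) : omega n (a + b) = omega n a * omega n b := by
  unfold omega
  rw [← Complex.exp_add]
  congr 1
  push_cast
  ring

lemma omega_zero' (n : ℕ) : omega n 0 = 1 := by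
  simp [omega]

lemma omega_nat_mul (n : ℕ) (t : ℕ) (c : ℤ) : omega n ((t : ℤ) * c) = (omega n c) ^ t := by
  induction t with
  | zero => simpa using omega_zero' n
  | succ k ih =>
      have : ((k + 1 : ℕ) : ℤ) * c = (k : ℤ) * c + c := by push_cast; ring
      rw [this, omega_add', ih, pow_succ]

lemma omega_mul_self (n : ℕ) (hn : n ≠ 0) (k : ℤ) : omega n ((n : ℤ) * k) = 1 := by
  unfold omega
  have hn' : (n : ℂ) ≠ 0 := by exact_mod_cast hn
  have : 2 * (Real.pi : ℂ) * Complex.I * ((n : ℤ) * k : ℤ) / n = (k : ℂ) * (2 * Real.pi * Complex.I) := by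
    push_cast
    field_simp
  rw [this, Complex.exp_int_mul_two_pi_mul_I]


lemma omega_ne_one (n : ℕ) (hn : n ≠ 0) (c : ℤ) (hc : ¬ (n : ℤ) ∣ c) : omega n c ≠ 1 := by
  intro h
  rw [omega, Complex.exp_eq_one_iff] at h
  obtain ⟨m, hm⟩ := h
  have hn' : (n : ℂ) ≠ 0 := by exact_mod_cast hn
  have h2 : (2 * (Real.pi : ℂ) * Complex.I) ≠ 0 := by
    simp [Real.pi_ne_zero, Complex.I_ne_zero, Complex.ofReal_ne_zero]
  have hm' : 2 * (Real.pi : ℂ) * Complex.I * ((c : ℂ) / n)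
      = 2 * (Real.pi : ℂ) * Complex.I * m := by
    rw [← mul_div_assoc, hm]; ring
  have h3 : (c : ℂ) / n = m := mul_left_cancel₀ h2 hm'
  rw [div_eq_iff hn'] at h3
  have h4 : c = m * n := by exact_mod_cast h3
  exact hc ⟨m, by linarith⟩

lemma sum_zmod_eq_sum_range {n : ℕ} [NeZero n] (g : ℕ → ℂ) :
    ∑ t : ZMod n, g t.val = ∑ k ∈ Finset.range n, g k := by
  refine Finset.sum_nbij' (fun t => t.val) (fun k => (k : ZMod n)) ?_ ?_ ?_ ?_ ?_
  · intro t _; exact Finset.mem_range.mpr (ZMod.val_lt t)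
  · intro k _; exact Finset.mem_univ _
  · intro t _; exact ZMod.natCast_rightInverse t
  · intro k hk; exact ZMod.val_natCast_of_lt (Finset.mem_range.mp hk)
  · intro t _; rfl

lemma sum_omega (n : ℕ) [NeZero n] (c : ℤ) :
    ∑ t : ZMod n, omega n ((t.val : ℤ) * c) = if (n : ℤ) ∣ c then (n : ℂ) else 0 := by
  have hn : n ≠ 0 := NeZero.ne n
  rw [sum_zmod_eq_sum_range (fun k => omega n ((k : ℤ) * c))]
  by_cases h : (n : ℤ) ∣ c
  · obtain ⟨k, rfl⟩ := h
    rw [if_pos (Dvd.intro k rfl)]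
    have h1 : ∀ t : ℕ, omega n ((t : ℤ) * ((n : ℤ) * k)) = 1 := by
      intro t
      rw [omega_nat_mul, omega_mul_self n hn, one_pow]
    rw [Finset.sum_congr rfl (fun t _ => h1 t)]
    simp
  · rw [if_neg h]
    have hne := omega_ne_one n hn c h
    have : ∀ t ∈ Finset.range n, omega n ((t : ℤ) * c) = (omega n c) ^ t := fun t _ => omega_nat_mul n t c
    rw [Finset.sum_congr rfl this, geom_sum_eq hne]
    have : (omega n c) ^ n = 1 := by
      rw [← omega_nat_mul]
      have : ((n : ℕ) : ℤ) * c = (n : ℤ) * c := rfl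
      rw [this, omega_mul_self n hn]
    rw [this]
    simp

end Aux

lemma omega_double (d : ℕ) (hd : d ≠ 0) (a : ℤ) : omega d a = omega (2 * d) (2 * a) := by
  unfold omega
  congr 1
  have hd' : (d : ℂ) ≠ 0 := by exact_mod_cast hd
  have h2d' : ((2 * d : ℕ) : ℂ) ≠ 0 := by
    push_cast; exact mul_ne_zero two_ne_zero hd'
  rw [div_eq_div_iff hd' h2d']
  push_cast
  ring

lemma A_apply (d : ℕ) [NeZero d] (m : ZMod (2 * d) × ZMod (2 * d)) (i j : ZMod d) :
    A d m i j = if i + j = ((m.1.val : ℕ) : ZMod d)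
      then omega (2 * d) (-((m.1.val : ℤ) * (m.2.val : ℤ))) * omega d ((m.2.val : ℤ) * (i.val : ℤ))
      else 0 := by
  unfold A V Vint R Zpow Xpow
  simp only [Matrix.mul_apply, Matrix.smul_apply, Matrix.of_apply, smul_eq_mul]
  rw [Finset.sum_eq_single (-j)]
  · rw [Finset.sum_eq_single i]
    · have hc : (((m.1.val : ℤ) : ZMod d)) = ((m.1.val : ℕ) : ZMod d) := by push_cast; rfl
      simp only [if_pos rfl, mul_one, one_mul, hc]
      by_cases h : i + j = ((m.1.val : ℕ) : ZMod d)
      · have h' : i = -j + ((m.1.val : ℕ) : ZMod d) := by rw [← h]; ring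
        rw [if_pos h', if_pos h]
        simp
      · have h' : ¬ (i = -j + ((m.1.val : ℕ) : ZMod d)) := fun hh => h (by rw [hh]; ring)
        rw [if_neg h', if_neg h]
        simp
    · intro k _ hk
      rw [if_neg (fun hh => hk hh.symm)]
      simp
    · simp
  · intro l _ hl
    rw [if_neg hl]
    simp
  · simp

lemma sum_A (d : ℕ) [NeZero d] (i j : ZMod d) :
    ∑ m : ZMod (2 * d) × ZMod (2 * d), A d m i j = if i = j then (2 * (d : ℂ)) else 0 := by
  haveI : NeZero (2 * d) := ⟨by simp [NeZero.ne d]⟩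
  have hd : d ≠ 0 := NeZero.ne d
  rw [Fintype.sum_prod_type]
  set a0 : ZMod (2 * d) := ((2 * i.val : ℕ) : ZMod (2 * d)) with ha0
  have step1 : ∀ a : ZMod (2 * d),
      (∑ b : ZMod (2 * d), A d (a, b) i j)
        = if a = a0 then (if i + j = ((a.val : ℕ) : ZMod d) then (2 * (d : ℂ)) else 0) else 0 := by
    intro a
    have key : ∀ b : ZMod (2 * d),
        A d (a, b) i j = if i + j = ((a.val : ℕ) : ZMod d)
          then omega (2 * d) ((b.val : ℤ) * (2 * (i.val : ℤ) - (a.val : ℤ))) else 0 := by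
      intro b
      rw [A_apply]
      by_cases h : i + j = ((a.val : ℕ) : ZMod d)
      · rw [if_pos h, if_pos h, omega_double d hd, ← omega_add']
        congr 1
        ring
      · rw [if_neg h, if_neg h]
    simp only [key]
    by_cases h : i + j = ((a.val : ℕ) : ZMod d)
    · simp only [if_pos h]
      rw [sum_omega]
      have hiff : ((2 * d : ℕ) : ℤ) ∣ (2 * (i.val : ℤ) - (a.val : ℤ)) ↔ a = a0 := by
        rw [← ZMod.intCast_zmod_eq_zero_iff_dvd]
        have hcast : (((2 * (i.val : ℤ) - (a.val : ℤ)) : ℤ) : ZMod (2 * d)) = a0 - a := by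
          push_cast [ha0]
          try rw [ZMod.natCast_val a, ZMod.cast_id]
          try ring
        rw [hcast, sub_eq_zero, eq_comm]
      simp only [hiff]
      by_cases h2 : a = a0 <;> simp [h2, h]
    · simp only [if_neg h, Finset.sum_const_zero]
      by_cases h2 : a = a0 <;> simp [h2, h]
  rw [Finset.sum_congr rfl (fun a _ => step1 a), Finset.sum_ite_eq']
  simp only [Finset.mem_univ, if_pos]
  have hv : a0.val = 2 * i.val := by
    rw [ha0, ZMod.val_natCast_of_lt]
    have := ZMod.val_lt i
    omega
  rw [hv]
  have : ((2 * i.val : ℕ) : ZMod d) = i + i := by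
    push_cast
    rw [ZMod.natCast_val, ZMod.cast_id]
    ring
  rw [this]
  by_cases h : i = j
  · rw [if_pos (by rw [h]), if_pos h]
  · rw [if_neg (fun hh => h ((add_left_cancel hh).symm)), if_neg h]

theorem stmt3 (d : ℕ) [NeZero d] :
    (∑ m : ZMod (2 * d) × ZMod (2 * d), A d m
        = (2 * (d : ℂ)) • (1 : Matrix (ZMod d) (ZMod d) ℂ)) ∧
    OpW d (fun _ => 1) = (d : ℂ) • (1 : Matrix (ZMod d) (ZMod d) ℂ) := by
  haveI : NeZero (2 * d) := ⟨by simp [NeZero.ne d]⟩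
  have h1 : ∑ m : ZMod (2 * d) × ZMod (2 * d), A d m
      = (2 * (d : ℂ)) • (1 : Matrix (ZMod d) (ZMod d) ℂ) := by
    ext i j
    rw [Matrix.sum_apply, sum_A]
    simp only [Matrix.smul_apply, Matrix.one_apply, smul_eq_mul, mul_ite, mul_one, mul_zero]
  refine ⟨h1, ?_⟩
  unfold OpW
  simp only [one_smul]
  rw [h1, smul_smul]
  congr 1
  ring
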